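/- arXiv:2305.18237 — 10 statements merged into one kernel-verified Lean document; each statement's English description precedes it below -/
import Mathlib

section
/- Let f(u) = sin u, g(u) = cos u, α = β = 1 on J = (−π/4, π/4), giving a first-type surface S₁ (ε = −1; the conditions f'² + g'² > 0 and f² − g² < 0 hold on J). Then for every u ∈ J, H_φ(u) = |−1 + λ sin²u + μ cos²u|. In particular, for λ = μ = 1 (density e^{x²+y²+z²−t²}) the surface is weighted minimal. -/
open Real Set

/-- Weighted mean curvature of the timelike general rotational surface `S_i`
(`ε = -1` for the first type, `ε = 1` for the second type) in `E₁⁴` with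
density `e^{λ(x²+y²)+μ(z²−t²)}`. -/
noncomputable def Hphi (α β lam mu ε : ℝ) (f g : ℝ → ℝ) (u : ℝ) : ℝ :=
  |((α ^ 2 * f u * deriv g u + β ^ 2 * g u * deriv f u)
      - 2 * ε * mu * (α ^ 2 * (f u) ^ 2 + ε * β ^ 2 * (g u) ^ 2) * deriv f u * g u)
     * ((deriv f u) ^ 2 - ε * (deriv g u) ^ 2)
   + (α ^ 2 * (f u) ^ 2 + ε * β ^ 2 * (g u) ^ 2)
     * (2 * ε * lam * ((deriv f u) ^ 2 - ε * (deriv g u) ^ 2) * f u * deriv g u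
        - deriv g u * deriv (deriv f) u + deriv f u * deriv (deriv g) u)|
  / (2 * (ε * α ^ 2 * (f u) ^ 2 + β ^ 2 * (g u) ^ 2)
       * (-ε * (deriv f u) ^ 2 + (deriv g u) ^ 2) ^ ((3 : ℝ) / 2))

lemma hphi_eval (lam mu u : ℝ) (hc : 0 < Real.cos u ^ 2 - Real.sin u ^ 2) :
    Hphi 1 1 lam mu (-1) Real.sin Real.cos u
      = |(-1 : ℝ) + lam * Real.sin u ^ 2 + mu * Real.cos u ^ 2| := by
  have h1 : deriv Real.sin = Real.cos := Real.deriv_sin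
  have h2 : deriv Real.cos = fun x => -Real.sin x := Real.deriv_cos'
  have h3 : deriv (deriv Real.sin) u = -Real.sin u := by
    rw [h1]; exact Real.deriv_cos
  have h4 : deriv (deriv Real.cos) u = -Real.cos u := by
    rw [h2]
    have : deriv (fun x => -Real.sin x) u = -Real.cos u := by
      simp
    exact this
  have hpy : Real.sin u ^ 2 + Real.cos u ^ 2 = 1 := Real.sin_sq_add_cos_sq u
  unfold Hphi
  rw [h3, h4, h1, h2]
  simp only
  set s := Real.sin u
  set c := Real.cos u
  have hrw : -(-1 : ℝ) * c ^ 2 + (-s) ^ 2 = 1 := by nlinarith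
  rw [hrw, Real.one_rpow]
  have hE : ((1 : ℝ) ^ 2 * s * -s + 1 ^ 2 * c * c
        - 2 * (-1) * mu * (1 ^ 2 * s ^ 2 + -1 * 1 ^ 2 * c ^ 2) * c * c)
       * (c ^ 2 - -1 * (-s) ^ 2)
      + (1 ^ 2 * s ^ 2 + -1 * 1 ^ 2 * c ^ 2)
        * (2 * (-1) * lam * (c ^ 2 - -1 * (-s) ^ 2) * s * -s - -s * -s + c * -c)
      = (-2 * (c ^ 2 - s ^ 2)) * ((-1 : ℝ) + lam * s ^ 2 + mu * c ^ 2) := by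
    linear_combination ((c ^ 2 - s ^ 2) * (2 - 2 * lam * s ^ 2 - 2 * mu * c ^ 2)) * hpy
  rw [hE]
  rw [abs_mul, abs_of_nonpos (by linarith : (-2 : ℝ) * (c ^ 2 - s ^ 2) ≤ 0)]
  have hden : 2 * ((-1 : ℝ) * 1 ^ 2 * s ^ 2 + 1 ^ 2 * c ^ 2) * 1
      = 2 * (c ^ 2 - s ^ 2) := by ring
  rw [hden]
  field_simp

theorem example_first_type_sin_cos (lam mu : ℝ) :
    (∀ u ∈ Set.Ioo (-(π / 4)) (π / 4),
        Hphi 1 1 lam mu (-1) Real.sin Real.cos u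
          = |(-1 : ℝ) + lam * Real.sin u ^ 2 + mu * Real.cos u ^ 2|)
    ∧ (lam = 1 → mu = 1 → ∀ u ∈ Set.Ioo (-(π / 4)) (π / 4),
        Hphi 1 1 lam mu (-1) Real.sin Real.cos u = 0) := by
  have key : ∀ u ∈ Set.Ioo (-(π / 4)) (π / 4),
      Hphi 1 1 lam mu (-1) Real.sin Real.cos u
        = |(-1 : ℝ) + lam * Real.sin u ^ 2 + mu * Real.cos u ^ 2| := by
    intro u hu
    apply hphi_eval
    have h2u : 0 < Real.cos (2 * u) := by
      apply Real.cos_pos_of_mem_Ioo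
      constructor
      · have := hu.1; linarith
      · have := hu.2; linarith
    have h2 := Real.cos_two_mul u
    have h3 := Real.sin_sq_add_cos_sq u
    linarith
  refine ⟨key, fun hl hm u hu => ?_⟩
  rw [key u hu, hl, hm]
  have := Real.sin_sq_add_cos_sq u
  rw [show (-1 : ℝ) + 1 * Real.sin u ^ 2 + 1 * Real.cos u ^ 2 = 0 by linarith]
  exact abs_zero
end

section
/- Let f(u) = cosh u, g(u) = sinh u, α = 3, β = 2 on J = ℝ, giving a second-type surface S₂ (ε = +1; the conditions f'² − g'² = −1 < 0 and 9f² + 4g² > 0 hold). Then for every u ∈ ℝ, H_φ(u) = |1 + λ cosh²u − μ sinh²u|. In particular, for λ = μ = −1 (density e^{−x²−y²−z²+t²}) the surface is weighted minimal. -/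
open Real Set

theorem example_second_type_cosh_sinh (lam mu : ℝ) :
    (∀ u : ℝ,
        Hphi 3 2 lam mu 1 Real.cosh Real.sinh u
          = |(1 : ℝ) + lam * Real.cosh u ^ 2 - mu * Real.sinh u ^ 2|)
    ∧ (lam = -1 → mu = -1 → ∀ u : ℝ,
        Hphi 3 2 lam mu 1 Real.cosh Real.sinh u = 0) := by
  have key : ∀ u : ℝ,
      Hphi 3 2 lam mu 1 Real.cosh Real.sinh u
        = |(1 : ℝ) + lam * Real.cosh u ^ 2 - mu * Real.sinh u ^ 2| := by
    intro u
    have hc : Real.cosh u ^ 2 = 1 + Real.sinh u ^ 2 := by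
      have := Real.cosh_sq_sub_sinh_sq u; nlinarith
    have hd : deriv Real.cosh = Real.sinh := Real.deriv_cosh
    have hd' : deriv Real.sinh = Real.cosh := Real.deriv_sinh
    have hpos : (0:ℝ) < 9 * Real.cosh u ^ 2 + 4 * Real.sinh u ^ 2 := by nlinarith
    unfold Hphi
    simp only [hd, hd']
    set c := Real.cosh u
    set s := Real.sinh u
    have h1 : (-(1:ℝ) * s ^ 2 + c ^ 2) = 1 := by nlinarith
    have hnum : ((3:ℝ) ^ 2 * c * c + 2 ^ 2 * s * s
          - 2 * 1 * mu * (3 ^ 2 * c ^ 2 + 1 * 2 ^ 2 * s ^ 2) * s * s) * (s ^ 2 - 1 * c ^ 2)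
        + (3 ^ 2 * c ^ 2 + 1 * 2 ^ 2 * s ^ 2)
          * (2 * 1 * lam * (s ^ 2 - 1 * c ^ 2) * c * c - c * c + s * s)
        = -((2 * (1 * 3 ^ 2 * c ^ 2 + 2 ^ 2 * s ^ 2))
            * (1 + lam * c ^ 2 - mu * s ^ 2)) := by
      linear_combination (-2 * (9 * c ^ 2 + 4 * s ^ 2) * (1 + lam * c ^ 2 - mu * s ^ 2)) * hc
    rw [hnum, h1, Real.one_rpow, abs_neg, abs_mul]
    have hD : (0:ℝ) < 2 * (1 * 3 ^ 2 * c ^ 2 + 2 ^ 2 * s ^ 2) := by nlinarith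
    rw [abs_of_pos hD]; field_simp
    exact mul_div_cancel_left₀ _ (ne_of_gt (by nlinarith))
  refine ⟨key, fun hl hm u => ?_⟩
  rw [key u, hl, hm]
  have hc : Real.cosh u ^ 2 = 1 + Real.sinh u ^ 2 := by
    have := Real.cosh_sq_sub_sinh_sq u; nlinarith
  rw [hc]; ring_nf; simp
end

section
/- Fix ε = −1 (first type) or ε = +1 (second type) and suppose f ≡ k on J for a nonzero constant k. Then for every u ∈ J: (i) H_φ(u) = |k(α²(1 + 2εk²λ) + 2β²λ g(u)²)| / (2(εα²k² + β²g(u)²)); (ii) if k(α²(1 + 2εk²λ) + 2β²λg(u)²) > 0 then H_φ(u) ≠ kλ and g(u)² = α²k(ε − 2kH_φ(u) + 2k²λ) / (2εβ²(H_φ(u) − kλ)); (iii) if k(α²(1 + 2εk²λ) + 2β²λg(u)²) < 0 then H_φ(u) ≠ −kλ and g(u)² = α²k(ε + 2kH_φ(u) + 2k²λ) / (−2εβ²(H_φ(u) + kλ)). -/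
open Real Set

lemma Hphi_const_f_eval (α β lam mu ε k : ℝ) (g : ℝ → ℝ) (u : ℝ)
    (hε : ε = -1 ∨ ε = 1) (hx : deriv g u ≠ 0) :
    Hphi α β lam mu ε (fun _ => k) g u
      = |k * (α ^ 2 * (1 + 2 * ε * k ^ 2 * lam) + 2 * β ^ 2 * lam * (g u) ^ 2)|
          / (2 * (ε * α ^ 2 * k ^ 2 + β ^ 2 * (g u) ^ 2)) := by
  have hd0 : deriv (fun _ : ℝ => k) = fun _ => (0:ℝ) := by funext t; exact deriv_const t k
  unfold Hphi
  rw [hd0]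
  simp only [deriv_const]
  set x := deriv g u with hxd
  rw [show -ε * (0:ℝ) ^ 2 + x ^ 2 = x ^ 2 by ring]
  have hpow : (x ^ 2 : ℝ) ^ ((3:ℝ) / 2) = |x| ^ 3 := by
    rw [← sq_abs, ← Real.rpow_natCast |x| 2, ← Real.rpow_mul (abs_nonneg x),
      show ((2:ℕ):ℝ) * ((3:ℝ)/2) = ((3:ℕ):ℝ) by norm_num, Real.rpow_natCast]
  rw [hpow]
  rw [show (α ^ 2 * k * x + β ^ 2 * g u * 0 -
        2 * ε * mu * (α ^ 2 * k ^ 2 + ε * β ^ 2 * g u ^ 2) * 0 * g u) * (0 ^ 2 - ε * x ^ 2) +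
      (α ^ 2 * k ^ 2 + ε * β ^ 2 * g u ^ 2) *
        (2 * ε * lam * (0 ^ 2 - ε * x ^ 2) * k * x - x * 0 + 0 * deriv (deriv g) u)
      = -(x ^ 3) * (ε * (k * (α ^ 2 * (1 + 2 * ε * k ^ 2 * lam) + 2 * β ^ 2 * lam * g u ^ 2)))
      by rcases hε with rfl | rfl <;> ring]
  rw [abs_mul, abs_neg, abs_pow, abs_mul,
    show |ε| = 1 by rcases hε with rfl | rfl <;> norm_num, one_mul,
    show 2 * (ε * α ^ 2 * k ^ 2 + β ^ 2 * g u ^ 2) * |x| ^ 3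
      = |x| ^ 3 * (2 * (ε * α ^ 2 * k ^ 2 + β ^ 2 * g u ^ 2)) by ring,
    mul_div_mul_left _ _ (by positivity : |x| ^ 3 ≠ 0)]

lemma aux_pos (α β lam ε k G H : ℝ) (hk : k ≠ 0) (hα : 0 < α) (hβ : 0 < β)
    (hε : ε = -1 ∨ ε = 1)
    (hD : 0 < ε * α ^ 2 * k ^ 2 + β ^ 2 * G ^ 2)
    (hH : H = |k * (α ^ 2 * (1 + 2 * ε * k ^ 2 * lam) + 2 * β ^ 2 * lam * G ^ 2)|
        / (2 * (ε * α ^ 2 * k ^ 2 + β ^ 2 * G ^ 2)))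
    (hP : 0 < k * (α ^ 2 * (1 + 2 * ε * k ^ 2 * lam) + 2 * β ^ 2 * lam * G ^ 2)) :
    H ≠ k * lam ∧
      G ^ 2 = α ^ 2 * k * (ε - 2 * k * H + 2 * k ^ 2 * lam)
        / (2 * ε * β ^ 2 * (H - k * lam)) := by
  have hεne : ε ≠ 0 := by rcases hε with rfl | rfl <;> norm_num
  rw [abs_of_pos hP] at hH
  have hsub : H - k * lam = k * α ^ 2 / (2 * (ε * α ^ 2 * k ^ 2 + β ^ 2 * G ^ 2)) := by
    rw [hH]; field_simp [hD.ne', (by linarith : k ^ 2 * α ^ 2 * ε + β ^ 2 * G ^ 2 ≠ 0), (by linarith : ε * k ^ 2 * α ^ 2 + G ^ 2 * β ^ 2 ≠ 0)]; ring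
  have hne : H - k * lam ≠ 0 := by
    rw [hsub]
    exact div_ne_zero (mul_ne_zero hk (by positivity)) (by positivity)
  have hden : 2 * ε * β ^ 2 * (H - k * lam) ≠ 0 := by
    refine mul_ne_zero ?_ hne
    exact mul_ne_zero (mul_ne_zero two_ne_zero hεne) (by positivity)
  refine ⟨sub_ne_zero.mp hne, ?_⟩
  rw [eq_div_iff hden, hsub, hH]
  field_simp [hD.ne', (by linarith : k ^ 2 * α ^ 2 * ε + β ^ 2 * G ^ 2 ≠ 0), (by linarith : ε * k ^ 2 * α ^ 2 + G ^ 2 * β ^ 2 ≠ 0)]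
  rcases hε with rfl | rfl <;> ring

lemma aux_neg (α β lam ε k G H : ℝ) (hk : k ≠ 0) (hα : 0 < α) (hβ : 0 < β)
    (hε : ε = -1 ∨ ε = 1)
    (hD : 0 < ε * α ^ 2 * k ^ 2 + β ^ 2 * G ^ 2)
    (hH : H = |k * (α ^ 2 * (1 + 2 * ε * k ^ 2 * lam) + 2 * β ^ 2 * lam * G ^ 2)|
        / (2 * (ε * α ^ 2 * k ^ 2 + β ^ 2 * G ^ 2)))
    (hP : k * (α ^ 2 * (1 + 2 * ε * k ^ 2 * lam) + 2 * β ^ 2 * lam * G ^ 2) < 0) :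
    H ≠ -(k * lam) ∧
      G ^ 2 = α ^ 2 * k * (ε + 2 * k * H + 2 * k ^ 2 * lam)
        / (-(2 * ε * β ^ 2) * (H + k * lam)) := by
  have hεne : ε ≠ 0 := by rcases hε with rfl | rfl <;> norm_num
  rw [abs_of_neg hP] at hH
  have hsub : H + k * lam = -(k * α ^ 2) / (2 * (ε * α ^ 2 * k ^ 2 + β ^ 2 * G ^ 2)) := by
    rw [hH]; field_simp [hD.ne', (by linarith : k ^ 2 * α ^ 2 * ε + β ^ 2 * G ^ 2 ≠ 0), (by linarith : ε * k ^ 2 * α ^ 2 + G ^ 2 * β ^ 2 ≠ 0)]; ring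
  have hne : H + k * lam ≠ 0 := by
    rw [hsub]
    exact div_ne_zero (neg_ne_zero.mpr (mul_ne_zero hk (by positivity))) (by positivity)
  have hden : -(2 * ε * β ^ 2) * (H + k * lam) ≠ 0 := by
    refine mul_ne_zero (neg_ne_zero.mpr ?_) hne
    exact mul_ne_zero (mul_ne_zero two_ne_zero hεne) (by positivity)
  refine ⟨fun h => hne (by rw [h]; ring), ?_⟩
  rw [eq_div_iff hden, hsub, hH]
  field_simp [hD.ne', (by linarith : k ^ 2 * α ^ 2 * ε + β ^ 2 * G ^ 2 ≠ 0), (by linarith : ε * k ^ 2 * α ^ 2 + G ^ 2 * β ^ 2 ≠ 0)]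
  rcases hε with rfl | rfl <;> ring

theorem Hphi_of_const_f
    (J : Set ℝ) (hJo : IsOpen J) (hJc : J.OrdConnected)
    (f g : ℝ → ℝ) (k : ℝ) (hk : k ≠ 0) (hfk : ∀ u, f u = k)
    (hg : ContDiffOn ℝ (⊤ : ℕ∞) g J)
    (α β lam mu ε : ℝ) (hα : 0 < α) (hβ : 0 < β) (hε : ε = -1 ∨ ε = 1)
    (hreg : ∀ u ∈ J, 0 < -ε * (deriv f u) ^ 2 + (deriv g u) ^ 2
        ∧ 0 < ε * α ^ 2 * (f u) ^ 2 + β ^ 2 * (g u) ^ 2) :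
    ∀ u ∈ J,
      Hphi α β lam mu ε f g u
          = |k * (α ^ 2 * (1 + 2 * ε * k ^ 2 * lam) + 2 * β ^ 2 * lam * (g u) ^ 2)|
              / (2 * (ε * α ^ 2 * k ^ 2 + β ^ 2 * (g u) ^ 2))
      ∧ (0 < k * (α ^ 2 * (1 + 2 * ε * k ^ 2 * lam) + 2 * β ^ 2 * lam * (g u) ^ 2) →
          Hphi α β lam mu ε f g u ≠ k * lam
          ∧ (g u) ^ 2 = α ^ 2 * k * (ε - 2 * k * Hphi α β lam mu ε f g u + 2 * k ^ 2 * lam)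
              / (2 * ε * β ^ 2 * (Hphi α β lam mu ε f g u - k * lam)))
      ∧ (k * (α ^ 2 * (1 + 2 * ε * k ^ 2 * lam) + 2 * β ^ 2 * lam * (g u) ^ 2) < 0 →
          Hphi α β lam mu ε f g u ≠ -(k * lam)
          ∧ (g u) ^ 2 = α ^ 2 * k * (ε + 2 * k * Hphi α β lam mu ε f g u + 2 * k ^ 2 * lam)
              / (-(2 * ε * β ^ 2) * (Hphi α β lam mu ε f g u + k * lam))) := by
  have hf : f = fun _ => k := funext hfk
  subst hf
  intro u hu
  obtain ⟨h1, h2⟩ := hreg u hu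
  have hd0 : deriv (fun _ : ℝ => k) = fun _ => (0:ℝ) := by funext t; exact deriv_const t k
  rw [hd0] at h1
  simp only at h2
  have hx2 : 0 < (deriv g u) ^ 2 := by simpa using h1
  have hxne : deriv g u ≠ 0 := fun h => by simp [h] at hx2
  have hkey := Hphi_const_f_eval α β lam mu ε k g u hε hxne
  refine ⟨hkey, fun hP => aux_pos α β lam ε k (g u) _ hk hα hβ hε h2 hkey hP,
    fun hP => aux_neg α β lam ε k (g u) _ hk hα hβ hε h2 hkey hP⟩
end

section
/- Consider the first-type surface S₁ (ε = −1) and suppose g ≡ l on J for a nonzero constant l (note the regularity conditions then force f'(u) ≠ 0 and β²l² − α²f(u)² > 0 for all u ∈ J). Then for every u ∈ J: (i) H_φ(u) = |l(2α²μf(u)² + β²(1 − 2l²μ))| / (2(β²l² − α²f(u)²)); (ii) if l(β²(1 − 2l²μ) + 2α²μf(u)²) > 0 then H_φ(u) ≠ −lμ and f(u)² = β²l(−1 + 2lH_φ(u) + 2l²μ) / (2α²(H_φ(u) + lμ)); (iii) if l(β²(1 − 2l²μ) + 2α²μf(u)²) < 0 then H_φ(u) ≠ lμ and f(u)² = β²l(−1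 − 2lH_φ(u) + 2l²μ) / (2α²(lμ − H_φ(u))). -/
open Real Set

theorem Hphi_first_type_of_const_g
    (J : Set ℝ) (hJo : IsOpen J) (hJc : J.OrdConnected)
    (f g : ℝ → ℝ) (l : ℝ) (hl : l ≠ 0) (hgl : ∀ u, g u = l)
    (hf : ContDiffOn ℝ (⊤ : ℕ∞) f J)
    (α β lam mu : ℝ) (hα : 0 < α) (hβ : 0 < β)
    (hreg : ∀ u ∈ J, 0 < (deriv f u) ^ 2 + (deriv g u) ^ 2
        ∧ α ^ 2 * (f u) ^ 2 - β ^ 2 * (g u) ^ 2 < 0) :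
    ∀ u ∈ J,
      Hphi α β lam mu (-1) f g u
          = |l * (2 * α ^ 2 * mu * (f u) ^ 2 + β ^ 2 * (1 - 2 * l ^ 2 * mu))|
              / (2 * (β ^ 2 * l ^ 2 - α ^ 2 * (f u) ^ 2))
      ∧ (0 < l * (β ^ 2 * (1 - 2 * l ^ 2 * mu) + 2 * α ^ 2 * mu * (f u) ^ 2) →
          Hphi α β lam mu (-1) f g u ≠ -(l * mu)
          ∧ (f u) ^ 2 = β ^ 2 * l * (-1 + 2 * l * Hphi α β lam mu (-1) f g u + 2 * l ^ 2 * mu)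
              / (2 * α ^ 2 * (Hphi α β lam mu (-1) f g u + l * mu)))
      ∧ (l * (β ^ 2 * (1 - 2 * l ^ 2 * mu) + 2 * α ^ 2 * mu * (f u) ^ 2) < 0 →
          Hphi α β lam mu (-1) f g u ≠ l * mu
          ∧ (f u) ^ 2 = β ^ 2 * l * (-1 - 2 * l * Hphi α β lam mu (-1) f g u + 2 * l ^ 2 * mu)
              / (2 * α ^ 2 * (l * mu - Hphi α β lam mu (-1) f g u))) := by
  have hg : g = fun _ => l := funext hgl
  subst hg
  intro u hu
  obtain ⟨hreg1, hreg2⟩ := hreg u hu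
  have hdg : deriv (fun _ : ℝ => l) = fun _ => (0:ℝ) := by funext x; simp
  have hd : deriv f u ≠ 0 := by
    rw [hdg] at hreg1
    intro h
    rw [h] at hreg1
    norm_num at hreg1
  have hD : 0 < β ^ 2 * l ^ 2 - α ^ 2 * (f u) ^ 2 := by
    simp only at hreg2; linarith
  have hpow : ((deriv f u) ^ 2) ^ ((3:ℝ)/2) = |deriv f u| ^ 3 := by
    rw [← sq_abs, ← Real.rpow_natCast |deriv f u| 2, ← Real.rpow_mul (abs_nonneg _)]
    norm_num
  have hi : Hphi α β lam mu (-1) f (fun _ => l) u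
      = |l * (2 * α ^ 2 * mu * (f u) ^ 2 + β ^ 2 * (1 - 2 * l ^ 2 * mu))|
        / (2 * (β ^ 2 * l ^ 2 - α ^ 2 * (f u) ^ 2)) := by
    unfold Hphi
    rw [hdg]
    simp only [deriv_const']
    rw [show (-(-1:ℝ) * (deriv f u)^2 + (0:ℝ)^2) = (deriv f u)^2 by ring, hpow]
    rw [show ((α ^ 2 * f u * 0 + β ^ 2 * l * deriv f u)
        - 2 * (-1) * mu * (α ^ 2 * (f u) ^ 2 + (-1) * β ^ 2 * l ^ 2) * deriv f u * l)
       * ((deriv f u) ^ 2 - (-1) * (0:ℝ) ^ 2)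
     + (α ^ 2 * (f u) ^ 2 + (-1) * β ^ 2 * l ^ 2)
       * (2 * (-1) * lam * ((deriv f u) ^ 2 - (-1) * (0:ℝ) ^ 2) * f u * 0
          - 0 * deriv (deriv f) u + deriv f u * 0)
      = (deriv f u)^3 * (l * (2 * α ^ 2 * mu * (f u) ^ 2 + β ^ 2 * (1 - 2 * l ^ 2 * mu))) by
        ring]
    rw [abs_mul, abs_pow]
    rw [show (2 * ((-1) * α ^ 2 * (f u) ^ 2 + β ^ 2 * l ^ 2) * |deriv f u| ^ 3)
      = |deriv f u| ^ 3 * (2 * (β ^ 2 * l ^ 2 - α ^ 2 * (f u) ^ 2)) by ring]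
    exact mul_div_mul_left _ _ (pow_ne_zero 3 (abs_ne_zero.mpr hd))
  set H := Hphi α β lam mu (-1) f (fun _ => l) u with hHdef
  set E := l * (β ^ 2 * (1 - 2 * l ^ 2 * mu) + 2 * α ^ 2 * mu * (f u) ^ 2) with hE
  have hEeq : l * (2 * α ^ 2 * mu * (f u) ^ 2 + β ^ 2 * (1 - 2 * l ^ 2 * mu)) = E := by
    rw [hE]; ring
  have hβ' : (β:ℝ) ≠ 0 := ne_of_gt hβ
  have hα' : (α:ℝ) ≠ 0 := ne_of_gt hα
  refine ⟨hi, ?_, ?_⟩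
  · intro hEpos
    have hH : H = E / (2 * (β ^ 2 * l ^ 2 - α ^ 2 * (f u) ^ 2)) := by
      rw [hi, hEeq, abs_of_pos hEpos]
    have hHE : H * (2 * (β ^ 2 * l ^ 2 - α ^ 2 * (f u) ^ 2)) = E := by
      rw [hH, div_mul_cancel₀ _ (by positivity)]
    have key : 2 * α ^ 2 * (H + l * mu) * (f u) ^ 2
        = β ^ 2 * l * (-1 + 2 * l * H + 2 * l ^ 2 * mu) := by
      rw [hE] at hHE; linear_combination -hHE
    have hne : H + l * mu ≠ 0 := by
      intro h
      have hH' : H = -(l * mu) := by linarith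
      rw [hH'] at key
      have hz : β ^ 2 * l = 0 := by linear_combination key
      exact (mul_ne_zero (pow_ne_zero 2 hβ') hl) hz
    refine ⟨fun h => hne (by rw [h]; ring), ?_⟩
    rw [eq_div_iff (mul_ne_zero (by positivity) hne)]
    linear_combination key
  · intro hEneg
    have hH : H = -E / (2 * (β ^ 2 * l ^ 2 - α ^ 2 * (f u) ^ 2)) := by
      rw [hi, hEeq, abs_of_neg hEneg]
    have hHE : H * (2 * (β ^ 2 * l ^ 2 - α ^ 2 * (f u) ^ 2)) = -E := by
      rw [hH, div_mul_cancel₀ _ (by positivity)]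
    have key : 2 * α ^ 2 * (l * mu - H) * (f u) ^ 2
        = β ^ 2 * l * (-1 - 2 * l * H + 2 * l ^ 2 * mu) := by
      rw [hE] at hHE; linear_combination hHE
    have hne : l * mu - H ≠ 0 := by
      intro h
      have hH' : H = l * mu := by linarith
      rw [hH'] at key
      have hz : β ^ 2 * l = 0 := by linear_combination key
      exact (mul_ne_zero (pow_ne_zero 2 hβ') hl) hz
    refine ⟨fun h => hne (by rw [h]; ring), ?_⟩
    rw [eq_div_iff (mul_ne_zero (by positivity) hne)]
    linear_combination key
end

section
/- Consider the first-type surface S₁ (ε = −1) and suppose g ≡ l on J for a nonzero constant l, where J is an open interval containing more than one point (note the regularity conditions then force f'(u) ≠ 0 for all u ∈ J). Then the weighted mean curvature function H_φ is not constant on J. -/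
open Real Set

private lemma sq_rpow_three_halves (x : ℝ) : (x ^ 2 : ℝ) ^ ((3:ℝ)/2) = |x| ^ 3 := by
  rw [← sq_abs, ← Real.rpow_natCast |x| 2, ← Real.rpow_mul (abs_nonneg x)]
  norm_num

theorem Hphi_first_type_of_const_g_not_constant
    (J : Set ℝ) (hJo : IsOpen J) (hJc : J.OrdConnected)
    (hJ2 : ∃ x ∈ J, ∃ y ∈ J, x ≠ y)
    (f g : ℝ → ℝ) (l : ℝ) (hl : l ≠ 0) (hgl : ∀ u, g u = l)
    (hf : ContDiffOn ℝ (⊤ : ℕ∞) f J)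
    (α β lam mu : ℝ) (hα : 0 < α) (hβ : 0 < β)
    (hreg : ∀ u ∈ J, 0 < (deriv f u) ^ 2 + (deriv g u) ^ 2
        ∧ α ^ 2 * (f u) ^ 2 - β ^ 2 * (g u) ^ 2 < 0) :
    ¬ ∃ c : ℝ, ∀ u ∈ J, Hphi α β lam mu (-1) f g u = c := by
  rintro ⟨c, hc⟩
  have hgE : g = fun _ => l := funext hgl
  have hg' : ∀ u, deriv g u = 0 := by
    intro u; rw [hgE]; exact deriv_const u l
  have hg'E : deriv g = fun _ => 0 := funext hg'
  have hg'' : ∀ u, deriv (deriv g) u = 0 := by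
    intro u; rw [hg'E]; exact deriv_const u 0
  obtain ⟨D, hD⟩ : ∃ D : ℝ → ℝ, ∀ u, D u = β ^ 2 * l ^ 2 - α ^ 2 * (f u) ^ 2 :=
    ⟨_, fun _ => rfl⟩
  have hDpos : ∀ u ∈ J, 0 < D u := by
    intro u hu
    have h := (hreg u hu).2
    rw [hgl u] at h
    rw [hD u]; nlinarith
  have hf'ne : ∀ u ∈ J, deriv f u ≠ 0 := by
    intro u hu
    have h := (hreg u hu).1
    rw [hg' u] at h
    intro h0; rw [h0] at h; norm_num at h
  -- key value of Hphi
  have key : ∀ u ∈ J, |l| * |β ^ 2 - 2 * mu * D u| = 2 * c * D u := by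
    intro u hu
    have h1 := hc u hu
    have hfu := hf'ne u hu
    have hDu := hDpos u hu
    unfold Hphi at h1
    rw [hgl u, hg' u, hg'' u] at h1
    have hpow : (-(-1:ℝ) * (deriv f u) ^ 2 + 0 ^ 2) ^ ((3:ℝ)/2) = |deriv f u| ^ 3 := by
      rw [show (-(-1:ℝ) * (deriv f u) ^ 2 + 0 ^ 2) = (deriv f u) ^ 2 by ring]
      exact sq_rpow_three_halves _
    rw [hpow] at h1
    have hnum : ((α ^ 2 * f u * 0 + β ^ 2 * l * deriv f u)
      - 2 * (-1) * mu * (α ^ 2 * (f u) ^ 2 + (-1) * β ^ 2 * l ^ 2) * deriv f u * l)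
     * ((deriv f u) ^ 2 - (-1) * 0 ^ 2)
   + (α ^ 2 * (f u) ^ 2 + (-1) * β ^ 2 * l ^ 2)
     * (2 * (-1) * lam * ((deriv f u) ^ 2 - (-1) * 0 ^ 2) * f u * 0
        - 0 * deriv (deriv f) u + deriv f u * 0)
      = (l * (β ^ 2 - 2 * mu * D u)) * (deriv f u) ^ 3 := by
      rw [hD u]; ring
    have hden : (2 * ((-1) * α ^ 2 * (f u) ^ 2 + β ^ 2 * l ^ 2)) = 2 * D u := by
      rw [hD u]; ring
    rw [hnum, hden] at h1
    rw [abs_mul, abs_pow] at h1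
    have habs : |deriv f u| ^ 3 ≠ 0 := by positivity
    have hden' : (2 * D u * |deriv f u| ^ 3) ≠ 0 := by positivity
    rw [div_eq_iff hden'] at h1
    have h2 : |l * (β ^ 2 - 2 * mu * D u)| = 2 * c * D u :=
      mul_right_cancel₀ habs (by linear_combination h1)
    rw [abs_mul] at h2
    exact h2
  have keysq : ∀ u ∈ J, l ^ 2 * (β ^ 2 - 2 * mu * D u) ^ 2 = 4 * c ^ 2 * (D u) ^ 2 := by
    intro u hu
    have h := key u hu
    have h2 : (|l| * |β ^ 2 - 2 * mu * D u|) ^ 2 = (2 * c * D u) ^ 2 := by rw [h]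
    rw [mul_pow, sq_abs, sq_abs] at h2
    linear_combination h2
  -- pick the base interval
  obtain ⟨x, hx, y, hy, hxy⟩ := hJ2
  set a := min x y with ha
  set b := max x y with hb
  have haJ : a ∈ J := by rcases min_choice x y with h | h <;> rw [ha, h] <;> assumption
  have hbJ : b ∈ J := by rcases max_choice x y with h | h <;> rw [hb, h] <;> assumption
  have hab : a < b := min_lt_max.mpr hxy
  have hIcc : Icc a b ⊆ J := hJc.out haJ hbJ
  have fcont : ContinuousOn f (Icc a b) := (hf.continuousOn).mono hIcc
  -- f is injective on Icc a b (Rolle)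
  have finj : ∀ p ∈ Icc a b, ∀ q ∈ Icc a b, p ≠ q → f p ≠ f q := by
    intro p hp q hq hpq hfpq
    rcases lt_or_gt_of_ne hpq with h | h
    · obtain ⟨ξ, hξ, hd⟩ := exists_deriv_eq_zero h
        (fcont.mono (Icc_subset_Icc hp.1 hq.2)) hfpq
      exact hf'ne ξ (hIcc ⟨le_trans hp.1 (le_of_lt hξ.1), le_trans (le_of_lt hξ.2) hq.2⟩) hd
    · obtain ⟨ξ, hξ, hd⟩ := exists_deriv_eq_zero h
        (fcont.mono (Icc_subset_Icc hq.1 hp.2)) hfpq.symm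
      exact hf'ne ξ (hIcc ⟨le_trans hq.1 (le_of_lt hξ.1), le_trans (le_of_lt hξ.2) hp.2⟩) hd
  -- find p q in Icc a b with (f p)^2 ≠ (f q)^2
  set m := (a + b) / 2 with hm
  have hmI : m ∈ Icc a b := ⟨by rw [hm]; linarith, by rw [hm]; linarith⟩
  have haI : a ∈ Icc a b := ⟨le_refl a, le_of_lt hab⟩
  have hbI : b ∈ Icc a b := ⟨le_of_lt hab, le_refl b⟩
  have ham : a ≠ m := by rw [hm]; intro h; linarith [hab]
  have hmb : m ≠ b := by rw [hm]; intro h; linarith [hab]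
  have habne : a ≠ b := ne_of_lt hab
  have hsq : ∃ p ∈ Icc a b, ∃ q ∈ Icc a b, (f p) ^ 2 ≠ (f q) ^ 2 := by
    by_contra hcon
    push_neg at hcon
    have h1 := hcon a haI m hmI
    have h2 := hcon a haI b hbI
    rcases sq_eq_sq_iff_eq_or_eq_neg.mp h1 with h1' | h1'
    · exact finj a haI m hmI ham h1'
    rcases sq_eq_sq_iff_eq_or_eq_neg.mp h2 with h2' | h2'
    · exact finj a haI b hbI habne h2'
    exact finj m hmI b hbI hmb (neg_injective (h1'.symm.trans h2'))
  obtain ⟨p, hp, q, hq, hpq2⟩ := hsq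
  have hDpq : D p ≠ D q := by
    intro h
    apply hpq2
    rw [hD p, hD q] at h
    have h2 : α ^ 2 * (f p) ^ 2 = α ^ 2 * (f q) ^ 2 := by linarith
    exact mul_left_cancel₀ (by positivity : (α : ℝ) ^ 2 ≠ 0) h2
  -- continuity of D
  have Dcont : ContinuousOn D (Icc a b) := by
    have : ContinuousOn (fun u => β ^ 2 * l ^ 2 - α ^ 2 * (f u) ^ 2) (Icc a b) :=
      continuousOn_const.sub (continuousOn_const.mul (fcont.pow 2))
    exact this.congr fun u _ => hD u
  -- IVT to get a third value
  have huIcc : uIcc p q ⊆ Icc a b := uIcc_subset_Icc hp hq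
  have htmem : (D p + D q) / 2 ∈ uIcc (D p) (D q) := by
    rcases le_total (D p) (D q) with h | h
    · exact mem_uIcc.mpr (Or.inl ⟨by linarith, by linarith⟩)
    · exact mem_uIcc.mpr (Or.inr ⟨by linarith, by linarith⟩)
  obtain ⟨w, hw, hDw⟩ := intermediate_value_uIcc (Dcont.mono huIcc) htmem
  have hpJ : p ∈ J := hIcc hp
  have hqJ : q ∈ J := hIcc hq
  have hwJ : w ∈ J := hIcc (huIcc hw)
  have hDwp : D w ≠ D p := by rw [hDw]; intro h; apply hDpq; linarith
  have hDwq : D w ≠ D q := by rw [hDw]; intro h; apply hDpq; linarith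
  -- final algebra
  have e1 := keysq p hpJ
  have e2 := keysq q hqJ
  have e3 := keysq w hwJ
  have e12 : (4 * l ^ 2 * mu ^ 2 - 4 * c ^ 2) * (D p + D q) - 4 * l ^ 2 * β ^ 2 * mu = 0 := by
    have h : (D p - D q) * ((4 * l ^ 2 * mu ^ 2 - 4 * c ^ 2) * (D p + D q)
        - 4 * l ^ 2 * β ^ 2 * mu) = 0 := by linear_combination e1 - e2
    exact (mul_eq_zero.mp h).resolve_left (sub_ne_zero.mpr hDpq)
  have e13 : (4 * l ^ 2 * mu ^ 2 - 4 * c ^ 2) * (D p + D w) - 4 * l ^ 2 * β ^ 2 * mu = 0 := by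
    have h : (D p - D w) * ((4 * l ^ 2 * mu ^ 2 - 4 * c ^ 2) * (D p + D w)
        - 4 * l ^ 2 * β ^ 2 * mu) = 0 := by linear_combination e1 - e3
    exact (mul_eq_zero.mp h).resolve_left (sub_ne_zero.mpr (Ne.symm hDwp))
  have hA : (4 * l ^ 2 * mu ^ 2 - 4 * c ^ 2) = 0 := by
    have h : (4 * l ^ 2 * mu ^ 2 - 4 * c ^ 2) * (D q - D w) = 0 := by
      linear_combination e12 - e13
    exact (mul_eq_zero.mp h).resolve_right (sub_ne_zero.mpr (Ne.symm hDwq))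
  have hB : l ^ 2 * β ^ 2 * mu = 0 := by
    linear_combination ((D p + D q) * hA - e12) / 4
  have hmu : mu = 0 := by
    rcases mul_eq_zero.mp hB with h | h
    · rcases mul_eq_zero.mp h with h' | h'
      · exact absurd h' (pow_ne_zero 2 hl)
      · exact absurd h' (by positivity)
    · exact h
  have hc0 : c ^ 2 = 0 := by rw [hmu] at hA; linarith
  rw [hmu, hc0] at e1
  have hz : l ^ 2 * β ^ 4 = 0 := by linear_combination e1
  have hlβ : l ^ 2 * β ^ 4 > 0 := by positivity
  linarith
end

section
/- Consider the first-type surface S₁ (ε = −1) and suppose f(u) = u for all u ∈ J (so α²u² − β²g(u)² < 0 on J). Then S₁ is weighted minimal (H_φ ≡ 0 on J) if and only if for all u ∈ J: d/du[arctan(g'(u))] = A₁(u), where A₁(u) = (2(λ u g'(u) − μ g(u))(α²u² − β²g(u)²) − (β²g(u) + α²u g'(u))) / (α²u² − β²g(u)²). -/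
open Real Set

theorem first_type_f_id_weighted_minimal_iff
    (J : Set ℝ) (hJo : IsOpen J) (hJc : J.OrdConnected)
    (f g : ℝ → ℝ) (hfu : ∀ u, f u = u)
    (hg : ContDiffOn ℝ (⊤ : ℕ∞) g J)
    (α β lam mu : ℝ) (hα : 0 < α) (hβ : 0 < β)
    (hreg : ∀ u ∈ J, 0 < (deriv f u) ^ 2 + (deriv g u) ^ 2
        ∧ α ^ 2 * (f u) ^ 2 - β ^ 2 * (g u) ^ 2 < 0) :
    (∀ u ∈ J, Hphi α β lam mu (-1) f g u = 0) ↔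
      (∀ u ∈ J, deriv (fun x => Real.arctan (deriv g x)) u
        = (2 * (lam * u * deriv g u - mu * g u) * (α ^ 2 * u ^ 2 - β ^ 2 * (g u) ^ 2)
            - (β ^ 2 * g u + α ^ 2 * u * deriv g u))
          / (α ^ 2 * u ^ 2 - β ^ 2 * (g u) ^ 2)) := by
  have hf : f = fun x => x := funext hfu
  have hdf : deriv f = fun _ => (1 : ℝ) := by
    funext x; rw [hf]; simp
  apply forall₂_congr
  intro u hu
  have hg1 : ContDiffOn ℝ (⊤ : ℕ∞) (deriv g) J := hg.deriv_of_isOpen hJo (by simp)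
  have hgd : DifferentiableAt ℝ (deriv g) u :=
    ((hg1.differentiableOn (by simp)).differentiableAt (hJo.mem_nhds hu))
  set a := deriv g u with ha
  set b := deriv (deriv g) u with hb
  set G := g u with hG
  have harc : deriv (fun x => Real.arctan (deriv g x)) u = b / (1 + a ^ 2) := by
    have h1 : HasDerivAt (deriv g) b u := hgd.hasDerivAt
    have h2 := h1.arctan
    rw [h2.deriv, ← ha]; ring_nf
  have hDlt : α ^ 2 * u ^ 2 - β ^ 2 * G ^ 2 < 0 := by
    have := (hreg u hu).2; rwa [hfu u] at this
  have hD : α ^ 2 * u ^ 2 - β ^ 2 * G ^ 2 ≠ 0 := hDlt.ne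
  have ha2 : (0:ℝ) < 1 + a ^ 2 := by positivity
  have hdenpos : 0 < 2 * (-1 * α ^ 2 * u ^ 2 + β ^ 2 * G ^ 2)
      * (-(-1) * (1:ℝ) ^ 2 + a ^ 2) ^ ((3 : ℝ) / 2) := by
    have h1 : (0:ℝ) < -1 * α ^ 2 * u ^ 2 + β ^ 2 * G ^ 2 := by nlinarith
    have h2 : (0:ℝ) < (-(-1) * (1:ℝ) ^ 2 + a ^ 2) ^ ((3 : ℝ) / 2) := by
      apply Real.rpow_pos_of_pos; nlinarith
    positivity
  rw [harc]
  simp only [Hphi, hfu, hdf, deriv_const']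
  rw [div_eq_zero_iff, abs_eq_zero]
  constructor
  · rintro (h | h)
    · rw [div_eq_div_iff ha2.ne' hD]
      linear_combination h
    · exact absurd h hdenpos.ne'
  · intro h
    left
    rw [div_eq_div_iff ha2.ne' hD] at h
    linear_combination h
end

section
/- Consider the second-type surface S₂ (ε = +1) and suppose f(u) = u for all u ∈ J (so 1 − g'(u)² < 0 on J). Then S₂ is weighted minimal (H_φ ≡ 0 on J) if and only if for all u ∈ J: g''(u)/(g'(u)² − 1) = A₁(u), where A₁(u) = (2(λ u g'(u) − μ g(u))(α²u² + β²g(u)²) + (β²g(u) + α²u g'(u))) / (α²u² + β²g(u)²). (Equivalently, d/du[log|(1 − g'(u))/(1 + g'(u))|] = 2A₁(u) on J.) -/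
open Real Set

theorem second_type_f_id_weighted_minimal_iff
    (J : Set ℝ) (hJo : IsOpen J) (hJc : J.OrdConnected)
    (f g : ℝ → ℝ) (hfu : ∀ u, f u = u)
    (hg : ContDiffOn ℝ (⊤ : ℕ∞) g J)
    (α β lam mu : ℝ) (hα : 0 < α) (hβ : 0 < β)
    (hreg : ∀ u ∈ J, (deriv f u) ^ 2 - (deriv g u) ^ 2 < 0
        ∧ 0 < α ^ 2 * (f u) ^ 2 + β ^ 2 * (g u) ^ 2) :
    (∀ u ∈ J, Hphi α β lam mu 1 f g u = 0) ↔
      (∀ u ∈ J, deriv (deriv g) u / ((deriv g u) ^ 2 - 1)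
        = (2 * (lam * u * deriv g u - mu * g u) * (α ^ 2 * u ^ 2 + β ^ 2 * (g u) ^ 2)
            + (β ^ 2 * g u + α ^ 2 * u * deriv g u))
          / (α ^ 2 * u ^ 2 + β ^ 2 * (g u) ^ 2)) := by
  have hf : f = fun u => u := funext hfu
  subst hf
  have hdf : deriv (fun u : ℝ => u) = fun _ => (1 : ℝ) := deriv_id''
  have hddf : deriv (deriv (fun u : ℝ => u)) = fun _ => (0 : ℝ) := by
    rw [hdf]; exact deriv_const' 1
  refine forall₂_congr fun u hu => ?_
  obtain ⟨h1, h2⟩ := hreg u hu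
  simp only [hdf, hddf] at h1 h2
  set d := deriv g u with hdd
  set s := deriv (deriv g) u with hs
  set G := g u with hG
  have hQ : 0 < α ^ 2 * u ^ 2 + β ^ 2 * G ^ 2 := by simpa using h2
  have hd : 0 < d ^ 2 - 1 := by nlinarith
  have hden : 0 < 2 * (1 * α ^ 2 * u ^ 2 + β ^ 2 * G ^ 2)
      * (-1 * 1 ^ 2 + d ^ 2) ^ ((3 : ℝ) / 2) := by
    have : (0:ℝ) < (-1 * 1 ^ 2 + d ^ 2) ^ ((3 : ℝ) / 2) :=
      Real.rpow_pos_of_pos (by nlinarith) _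
    have h2' : (0:ℝ) < 2 * (1 * α ^ 2 * u ^ 2 + β ^ 2 * G ^ 2) := by nlinarith
    exact mul_pos h2' this
  rw [Hphi]
  simp only [hdf, hddf, deriv_const']
  rw [div_eq_zero_iff]
  have hden' : ¬ (2 * ((1:ℝ) * α ^ 2 * u ^ 2 + β ^ 2 * G ^ 2)
      * (-1 * 1 ^ 2 + d ^ 2) ^ ((3 : ℝ) / 2) = 0) := ne_of_gt hden
  rw [or_iff_left (by simpa using hden'), abs_eq_zero,
    div_eq_div_iff (ne_of_gt hd) (ne_of_gt hQ)]
  constructor <;> intro h <;> · linear_combination h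
end

section
/- Consider the first-type surface S₁ (ε = −1) and suppose g(u) = u for all u ∈ J (so α²f(u)² − β²u² < 0 on J). Then S₁ is weighted minimal (H_φ ≡ 0 on J) if and only if for all u ∈ J: d/du[arctan(f'(u))] = A₂(u), where A₂(u) = (f(u)(−α² + 2(α²λ f(u)² − β²λ u²)) + u(−β²(1 − 2μu²) − 2α²μ f(u)²) f'(u)) / (β²u² − α²f(u)²). -/
open Real Set

theorem first_type_g_id_weighted_minimal_iff
    (J : Set ℝ) (hJo : IsOpen J) (hJc : J.OrdConnected)
    (f g : ℝ → ℝ) (hgu : ∀ u, g u = u)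
    (hf : ContDiffOn ℝ (⊤ : ℕ∞) f J)
    (α β lam mu : ℝ) (hα : 0 < α) (hβ : 0 < β)
    (hreg : ∀ u ∈ J, 0 < (deriv f u) ^ 2 + (deriv g u) ^ 2
        ∧ α ^ 2 * (f u) ^ 2 - β ^ 2 * (g u) ^ 2 < 0) :
    (∀ u ∈ J, Hphi α β lam mu (-1) f g u = 0) ↔
      (∀ u ∈ J, deriv (fun x => Real.arctan (deriv f x)) u
        = (f u * (-α ^ 2 + 2 * (α ^ 2 * lam * (f u) ^ 2 - β ^ 2 * lam * u ^ 2))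
            + u * (-β ^ 2 * (1 - 2 * mu * u ^ 2) - 2 * α ^ 2 * mu * (f u) ^ 2) * deriv f u)
          / (β ^ 2 * u ^ 2 - α ^ 2 * (f u) ^ 2)) := by
  have hg : g = id := funext fun x => hgu x
  have hdg : deriv g = fun _ => (1 : ℝ) := by rw [hg]; exact deriv_id'
  have hddg : deriv (deriv g) = fun _ => (0 : ℝ) := by
    rw [hdg]; funext x; exact deriv_const x 1
  -- deriv f is differentiable on J
  have hdf : ContDiffOn ℝ (⊤ : ℕ∞) (deriv f) J :=
    hf.deriv_of_isOpen hJo (by simp)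
  refine forall₂_congr fun u hu => ?_
  have hP : 0 < β ^ 2 * u ^ 2 - α ^ 2 * (f u) ^ 2 := by
    have := (hreg u hu).2
    rw [hgu u] at this; linarith
  set f' := deriv f u with hf'
  set f'' := deriv (deriv f) u with hf''
  have hQ : 0 < 1 + f' ^ 2 := by positivity
  have hdfu : HasDerivAt (deriv f) f'' u := by
    have : DifferentiableAt ℝ (deriv f) u :=
      ((hdf.differentiableOn (by simp)).differentiableAt (hJo.mem_nhds hu))
    exact this.hasDerivAt
  -- compute the arctan derivative
  have hat : deriv (fun x => Real.arctan (deriv f x)) u = f'' / (1 + f' ^ 2) := by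
    have h1 : HasDerivAt (fun x => Real.arctan (deriv f x))
        (1 / (1 + f' ^ 2) * f'') u :=
      (Real.hasDerivAt_arctan f').comp (h₂ := Real.arctan) u hdfu
    rw [h1.deriv]; ring
  rw [hat]
  -- rewrite Hphi
  have hgu' : g u = u := hgu u
  have hdgu : deriv g u = 1 := by rw [hdg]
  have hddgu : deriv (deriv g) u = 0 := by rw [hddg]
  rw [Hphi, hgu', hdgu, hddgu, ← hf', ← hf'']
  set P := β ^ 2 * u ^ 2 - α ^ 2 * (f u) ^ 2 with hPdef
  set N := f u * (-α ^ 2 + 2 * (α ^ 2 * lam * (f u) ^ 2 - β ^ 2 * lam * u ^ 2))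
      + u * (-β ^ 2 * (1 - 2 * mu * u ^ 2) - 2 * α ^ 2 * mu * (f u) ^ 2) * f' with hNdef
  have hden : 0 < 2 * ((-1 : ℝ) * α ^ 2 * (f u) ^ 2 + β ^ 2 * u ^ 2)
      * (-(-1 : ℝ) * f' ^ 2 + 1 ^ 2) ^ ((3 : ℝ) / 2) := by
    have h1 : (0:ℝ) < (-1 : ℝ) * α ^ 2 * (f u) ^ 2 + β ^ 2 * u ^ 2 := by
      rw [hPdef] at hP; linarith
    have h2 : (0:ℝ) < (-(-1 : ℝ) * f' ^ 2 + 1 ^ 2) ^ ((3 : ℝ) / 2) :=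
      Real.rpow_pos_of_pos (by nlinarith) _
    positivity
  rw [div_eq_zero_iff, abs_eq_zero]
  have hden' : ¬ (2 * ((-1 : ℝ) * α ^ 2 * (f u) ^ 2 + β ^ 2 * u ^ 2)
      * (-(-1 : ℝ) * f' ^ 2 + 1 ^ 2) ^ ((3 : ℝ) / 2) = 0) := ne_of_gt hden
  simp only [hden', or_false]
  -- now algebra: E = 0 ↔ f''/(1+f'^2) = N/P
  constructor
  · intro hE
    rw [div_eq_div_iff (ne_of_gt hQ) (ne_of_gt hP)]
    rw [hNdef, hPdef]
    linear_combination hE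
  · intro h
    have h' : f'' * P = N * (1 + f' ^ 2) := by
      rw [div_eq_div_iff (ne_of_gt hQ) (ne_of_gt hP)] at h
      exact h
    rw [hNdef, hPdef] at h'
    linear_combination h'
end

section
/- Consider the second-type surface S₂ (ε = +1) and suppose g(u) = u for all u ∈ J (so f'(u)² − 1 < 0 on J). Then S₂ is weighted minimal (H_φ ≡ 0 on J) if and only if for all u ∈ J: f''(u)/(f'(u)² − 1) = A₂(u), where A₂(u) = (f(u)(α² + 2(α²λ f(u)² + β²λ u²)) + u(β²(1 − 2μu²) − 2α²μ f(u)²) f'(u)) / (β²u² + α²f(u)²). (Equivalently, d/du[log((1 − f'(u))/(1 + f'(u)))] = 2A₂(u) on J.) -/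
open Real Set

theorem second_type_g_id_weighted_minimal_iff
    (J : Set ℝ) (hJo : IsOpen J) (hJc : J.OrdConnected)
    (f g : ℝ → ℝ) (hgu : ∀ u, g u = u)
    (hf : ContDiffOn ℝ (⊤ : ℕ∞) f J)
    (α β lam mu : ℝ) (hα : 0 < α) (hβ : 0 < β)
    (hreg : ∀ u ∈ J, (deriv f u) ^ 2 - (deriv g u) ^ 2 < 0
        ∧ 0 < α ^ 2 * (f u) ^ 2 + β ^ 2 * (g u) ^ 2) :
    (∀ u ∈ J, Hphi α β lam mu 1 f g u = 0) ↔
      (∀ u ∈ J, deriv (deriv f) u / ((deriv f u) ^ 2 - 1)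
        = (f u * (α ^ 2 + 2 * (α ^ 2 * lam * (f u) ^ 2 + β ^ 2 * lam * u ^ 2))
            + u * (β ^ 2 * (1 - 2 * mu * u ^ 2) - 2 * α ^ 2 * mu * (f u) ^ 2) * deriv f u)
          / (β ^ 2 * u ^ 2 + α ^ 2 * (f u) ^ 2)) := by
  have hg : g = id := funext hgu
  have hg1 : ∀ u, deriv g u = 1 := by intro u; simp [hg]
  have hg1' : deriv g = fun _ => (1 : ℝ) := funext hg1
  have hg2 : ∀ u, deriv (deriv g) u = 0 := by intro u; simp [hg1']
  constructor
  · intro h u hu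
    obtain ⟨h1, h2⟩ := hreg u hu
    rw [hg1] at h1
    have hguu : g u = u := hgu u
    rw [hguu] at h2
    have hN := h u hu
    unfold Hphi at hN
    rw [hg1, hg2, hguu] at hN
    have hden : (0 : ℝ) < 2 * (1 * α ^ 2 * (f u) ^ 2 + β ^ 2 * u ^ 2)
        * (-1 * (deriv f u) ^ 2 + 1 ^ 2) ^ ((3 : ℝ) / 2) := by
      apply mul_pos
      · nlinarith
      · apply Real.rpow_pos_of_pos; nlinarith
    rw [div_eq_zero_iff] at hN
    rcases hN with hN | hN
    swap
    · exact absurd hN (ne_of_gt hden)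
    rw [abs_eq_zero] at hN
    have hd1 : (deriv f u) ^ 2 - 1 ≠ 0 := by nlinarith
    have hd2 : β ^ 2 * u ^ 2 + α ^ 2 * (f u) ^ 2 ≠ 0 := by nlinarith [h2]
    rw [div_eq_div_iff hd1 hd2]
    linear_combination -hN
  · intro h u hu
    obtain ⟨h1, h2⟩ := hreg u hu
    rw [hg1] at h1
    have hguu : g u = u := hgu u
    rw [hguu] at h2
    have heq := h u hu
    have hd1 : (deriv f u) ^ 2 - 1 ≠ 0 := by nlinarith
    have hd2 : β ^ 2 * u ^ 2 + α ^ 2 * (f u) ^ 2 ≠ 0 := by nlinarith [h2]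
    rw [div_eq_div_iff hd1 hd2] at heq
    unfold Hphi
    rw [hg1, hg2, hguu]
    rw [div_eq_zero_iff]
    left
    rw [abs_eq_zero]
    linear_combination -heq
end

section
/- Let f(u) = sec u, g(u) = tan u on an open interval J ⊆ (−π/2, π/2), with α = β > 0, giving a second-type surface S₂ (ε = +1; indeed f'² − g'² = −sec²u < 0 and α²f² + β²g² > 0 on J). Then for every u ∈ J, H_φ(u) = |(μ + 1)cos(2u) + 2λ − μ + 1| / (2cos²u) (equivalently, H_φ(u) = |1 + λ sec²u − μ tan²u|). -/
open Real Set

lemma abs_div_eq_abs_div' {a b p q : ℝ} (hp : 0 < p) (hq : 0 < q)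
    (h : a * q = -(b * p)) : |a| / p = |b| / q := by
  rw [div_eq_div_iff hp.ne' hq.ne']
  calc |a| * q = |a * q| := by rw [abs_mul, abs_of_pos hq]
    _ = |b * p| := by rw [h, abs_neg]
    _ = |b| * p := by rw [abs_mul, abs_of_pos hp]

theorem example_second_type_sec_tan_Hphi
    (J : Set ℝ) (hJo : IsOpen J) (hJc : J.OrdConnected)
    (hJ : J ⊆ Set.Ioo (-(π / 2)) (π / 2))
    (α lam mu : ℝ) (hα : 0 < α) :
    ∀ u ∈ J, Hphi α α lam mu 1
        (fun u => (Real.cos u)⁻¹) (fun u => Real.tan u) u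
      = |(mu + 1) * Real.cos (2 * u) + 2 * lam - mu + 1| / (2 * (Real.cos u) ^ 2) := by
  intro u hu
  have hmem := hJ hu
  have hc : 0 < Real.cos u := Real.cos_pos_of_mem_Ioo hmem
  have hc' : Real.cos u ≠ 0 := hc.ne'
  set c := Real.cos u with hcdef
  set s := Real.sin u with hsdef
  have hf1 : deriv (fun x => (Real.cos x)⁻¹) u = s / c ^ 2 := by
    have := ((Real.hasDerivAt_cos u).inv hc').deriv
    rw [show (fun x => (Real.cos x)⁻¹) = Real.cos⁻¹ from rfl, this]; ring
  have hg1 : deriv (fun x => Real.tan x) u = 1 / c ^ 2 := by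
    simp only [hcdef]
    simpa using Real.deriv_tan u
  have hf2 : deriv (deriv (fun x => (Real.cos x)⁻¹)) u = (c ^ 2 + 2 * s ^ 2) / c ^ 3 := by
    have hopen : IsOpen {x : ℝ | Real.cos x ≠ 0} :=
      isOpen_compl_singleton.preimage Real.continuous_cos
    have hEq : deriv (fun x => (Real.cos x)⁻¹) =ᶠ[nhds u]
        fun x => Real.sin x / Real.cos x ^ 2 := by
      filter_upwards [hopen.mem_nhds hc'] with x hx
      have := ((Real.hasDerivAt_cos x).inv hx).deriv
      rw [show (fun x => (Real.cos x)⁻¹) = Real.cos⁻¹ from rfl, this]; ring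
    rw [hEq.deriv_eq]
    have h2 : HasDerivAt (fun x => Real.sin x / Real.cos x ^ 2)
        ((Real.cos u * Real.cos u ^ 2 - Real.sin u * (2 * Real.cos u ^ 1 * (-Real.sin u)))
          / (Real.cos u ^ 2) ^ 2) u :=
      (Real.hasDerivAt_sin u).div ((Real.hasDerivAt_cos u).pow 2) (pow_ne_zero 2 hc')
    rw [h2.deriv, ← hcdef, ← hsdef]
    field_simp
    ring
  have hg2 : deriv (deriv (fun x => Real.tan x)) u = 2 * s / c ^ 3 := by
    have hEq : deriv (fun x => Real.tan x) =ᶠ[nhds u] fun x => 1 / Real.cos x ^ 2 := by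
      filter_upwards with x
      simpa using Real.deriv_tan x
    rw [hEq.deriv_eq]
    have h2 : HasDerivAt (fun x => 1 / Real.cos x ^ 2)
        ((0 * Real.cos u ^ 2 - 1 * (2 * Real.cos u ^ 1 * (-Real.sin u)))
          / (Real.cos u ^ 2) ^ 2) u :=
      (hasDerivAt_const u 1).div ((Real.hasDerivAt_cos u).pow 2) (pow_ne_zero 2 hc')
    rw [h2.deriv, ← hcdef, ← hsdef]
    field_simp
    ring
  have hs2 : s ^ 2 = 1 - c ^ 2 := by
    rw [hsdef, hcdef, Real.sin_sq]
  have hrpow : (-(1:ℝ) * (s / c ^ 2) ^ 2 + (1 / c ^ 2) ^ 2) ^ ((3:ℝ)/2) = 1 / c ^ 3 := by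
    have hbase : -(1:ℝ) * (s / c ^ 2) ^ 2 + (1 / c ^ 2) ^ 2 = (c⁻¹) ^ 2 := by
      field_simp
      linear_combination (-1) * hs2
    rw [hbase, ← Real.rpow_natCast (c⁻¹) 2, ← Real.rpow_mul (by positivity)]
    norm_num
  have htan : Real.tan u = s / c := Real.tan_eq_sin_div_cos u
  simp only [Hphi, hf1, hg1, hf2, hg2, htan, Real.cos_two_mul, ← hcdef]
  rw [hrpow]
  have h2c : (0:ℝ) < 2 * c ^ 2 := by positivity
  have hD : (0:ℝ) < 2 * (1 * α ^ 2 * ((Real.cos u)⁻¹) ^ 2 + α ^ 2 * (s / c) ^ 2) * (1 / c ^ 3) := by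
    rw [← hcdef]; positivity
  apply abs_div_eq_abs_div' hD h2c
  rw [← hcdef]
  field_simp
  linear_combination (- 2 * s^2 * mu^1 + 1 * c^2 + 2 * lam^1 + 2 * c^2 * mu^1) * hs2
end
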